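/- For every 0 < p ≤ 1 and every C > 0 there exists a constant K = K(C, p) > 0 such that: whenever X is a p-Banach space over 𝔽 = ℂ and 𝒳 is a basis of X satisfying ‖f‖ ≤ C·‖f + g‖ for every f ∈ span{𝒳} and every g ∈ span{𝒳} ∩ X_+(𝒳) with supp(f) ∩ supp(g) = ∅, then ‖f‖ ≤ K·‖f + g‖ for every f, g ∈ X with supp(f) ∩ supp(g) = ∅; in particular 𝒳 is K-unconditional. -/

import Mathlib

open scoped BigOperators

noncomputable section

/-- A basis of a `p`-Banach space over `𝕜` (`𝕜 = ℝ` or `ℂ`), bundled with the `p`-norm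
`N`, the basis vectors `e`, and the biorthogonal functionals `coord`. -/
structure PBasis (𝕜 : Type*) [RCLike 𝕜] (X : Type*) [AddCommGroup X] [Module 𝕜 X]
    (p : ℝ) : Type _ where
  /-- the `p`-norm of the space -/
  N : X → ℝ
  N_nonneg : ∀ f : X, 0 ≤ N f
  N_eq_zero_iff : ∀ f : X, N f = 0 ↔ f = 0
  N_smul : ∀ (t : 𝕜) (f : X), N (t • f) = ‖t‖ * N f
  N_padd : ∀ f g : X, N (f + g) ^ p ≤ N f ^ p + N g ^ p
  /-- completeness with respect to the `p`-norm -/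
  complete : ∀ u : ℕ → X,
      (∀ ε : ℝ, 0 < ε → ∃ n₀ : ℕ, ∀ m n : ℕ, n₀ ≤ m → n₀ ≤ n → N (u m - u n) < ε) →
      ∃ f : X, ∀ ε : ℝ, 0 < ε → ∃ n₀ : ℕ, ∀ n : ℕ, n₀ ≤ n → N (u n - f) < ε
  /-- the basis vectors -/
  e : ℕ → X
  /-- the biorthogonal functionals -/
  coord : ℕ → X →ₗ[𝕜] 𝕜
  biorth : ∀ n m : ℕ, coord n (e m) = if n = m then (1 : 𝕜) else 0
  /-- the closed linear span of the basis vectors is the whole space -/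
  dense_span : ∀ f : X, ∀ ε : ℝ, 0 < ε →
      ∃ g ∈ Submodule.span 𝕜 (Set.range e), N (f - g) < ε
  e_bdd : ∃ c : ℝ, ∀ n : ℕ, N (e n) ≤ c
  coord_bdd : ∃ c : ℝ, ∀ (n : ℕ) (f : X), ‖coord n f‖ ≤ c * N f

namespace PBasis

variable {𝕜 : Type*} [RCLike 𝕜] {X : Type*} [AddCommGroup X] [Module 𝕜 X] {p : ℝ}

/-- The projection `P_A f = ∑_{n ∈ A} x_n^*(f) x_n`. -/
def proj (bs : PBasis 𝕜 X p) (A : Finset ℕ) (f : X) : X :=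
  ∑ n ∈ A, bs.coord n f • bs.e n

/-- The support of `f`. -/
def supp (bs : PBasis 𝕜 X p) (f : X) : Set ℕ := {n | bs.coord n f ≠ 0}

/-- `A` is a greedy set of `f`: `min_{n ∈ A} |x_n^*(f)| ≥ max_{m ∉ A} |x_m^*(f)|`. -/
def IsGreedySet (bs : PBasis 𝕜 X p) (f : X) (A : Finset ℕ) : Prop :=
  ∀ n ∈ A, ∀ m : ℕ, m ∉ A → ‖bs.coord m f‖ ≤ ‖bs.coord n f‖

/-- `𝟙_{ε,A} = ∑_{j ∈ A} ε_j x_j`. -/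
def indSign (bs : PBasis 𝕜 X p) (ε : ℕ → 𝕜) (A : Finset ℕ) : X :=
  ∑ j ∈ A, ε j • bs.e j

/-- `𝟙_A = ∑_{j ∈ A} x_j`. -/
def ind (bs : PBasis 𝕜 X p) (A : Finset ℕ) : X := ∑ j ∈ A, bs.e j

/-- `ε` is a sign on `A`. -/
def IsSign (ε : ℕ → 𝕜) (A : Finset ℕ) : Prop := ∀ j ∈ A, ‖ε j‖ = 1

/-- `min_{n ∈ A} |x_n^*(f)|`. -/
def minCoef (bs : PBasis 𝕜 X p) (f : X) (A : Finset ℕ) : ℝ :=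
  sInf ((fun n => ‖bs.coord n f‖) '' (A : Set ℕ))

/-- `‖f − P_A(f)‖ ≤ C·σ_m(f)` for every greedy set `A` of cardinality `m`. -/
def IsGreedyWith (bs : PBasis 𝕜 X p) (C : ℝ) : Prop :=
  ∀ (f : X) (A B : Finset ℕ) (a : ℕ → 𝕜), bs.IsGreedySet f A → B.card ≤ A.card →
    bs.N (f - bs.proj A f) ≤ C * bs.N (f - ∑ j ∈ B, a j • bs.e j)

/-- `‖f − P_A(f)‖ ≤ C·ρ_m(f)` for every greedy set `A` of cardinality `m`, where
`ρ_m(f) = inf {‖f − α 𝟙_{ε,B}‖ : |B| = m, ε sign}` and `α = min_{n ∈ A} |x_n^*(f)|`. -/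
def IsRGPCCWith (bs : PBasis 𝕜 X p) (C : ℝ) : Prop :=
  ∀ (f : X) (A B : Finset ℕ) (ε : ℕ → 𝕜), bs.IsGreedySet f A → B.card = A.card →
    IsSign ε B →
    bs.N (f - bs.proj A f) ≤ C * bs.N (f - ((bs.minCoef f A : ℝ) : 𝕜) • bs.indSign ε B)

/-- `‖f − P_A(f)‖ ≤ C·ϱ_m(f)` for every greedy set `A` of cardinality `m`, where
`ϱ_m(f) = inf {‖f − α 𝟙_B‖ : |B| = m}` and `α = min_{n ∈ A} |x_n^*(f)|`. -/
def IsURGPCCWith (bs : PBasis 𝕜 X p) (C : ℝ) : Prop :=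
  ∀ (f : X) (A B : Finset ℕ), bs.IsGreedySet f A → B.card = A.card →
    bs.N (f - bs.proj A f) ≤ C * bs.N (f - ((bs.minCoef f A : ℝ) : 𝕜) • bs.ind B)

/-- `K`-unconditionality. -/
def IsUncondWith (bs : PBasis 𝕜 X p) (K : ℝ) : Prop :=
  ∀ (A : Finset ℕ) (f : X), bs.N (bs.proj A f) ≤ K * bs.N f

/-- `C`-quasi-greediness. -/
def IsQuasiGreedyWith (bs : PBasis 𝕜 X p) (C : ℝ) : Prop :=
  ∀ (f : X) (A : Finset ℕ), bs.IsGreedySet f A → bs.N (f - bs.proj A f) ≤ C * bs.N f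

/-- `C`-almost-greediness. -/
def IsAlmostGreedyWith (bs : PBasis 𝕜 X p) (C : ℝ) : Prop :=
  ∀ (f : X) (A B : Finset ℕ), bs.IsGreedySet f A → B.card ≤ A.card →
    bs.N (f - bs.proj A f) ≤ C * bs.N (f - bs.proj B f)

/-- `D`-democracy. -/
def IsDemocraticWith (bs : PBasis 𝕜 X p) (D : ℝ) : Prop :=
  ∀ A B : Finset ℕ, A.card ≤ B.card → bs.N (bs.ind A) ≤ D * bs.N (bs.ind B)

/-- `D`-superdemocracy. -/
def IsSuperdemocraticWith (bs : PBasis 𝕜 X p) (D : ℝ) : Prop :=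
  ∀ (A B : Finset ℕ) (ε η : ℕ → 𝕜), A.card ≤ B.card → IsSign ε A → IsSign η B →
    bs.N (bs.indSign ε A) ≤ D * bs.N (bs.indSign η B)

/-- `A < B`, i.e. every element of `A` is smaller than every element of `B`. -/
def FinsetBefore (A B : Finset ℕ) : Prop := ∀ a ∈ A, ∀ b ∈ B, a < b

open scoped Classical in
/-- `sgn z = z/|z|` (with the convention `sgn 0 = 1`). -/
def sgn (z : 𝕜) : 𝕜 := if z = 0 then 1 else z / ((‖z‖ : ℝ) : 𝕜)

end PBasis

/-!
Multiplying by a unimodular scalar, the hypothesis also gives `‖u‖ ≤ C‖u + ω v‖` for `v` with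
nonnegative coefficients disjoint from `u`. Applied to the two halves of a nonnegative vector
this bounds its coordinate projections, and the binary expansion of multipliers in `[0, 1]`
(with the `p`-triangle inequality and a geometric series) bounds `∑ mₙ xₙ` by `∑ ρₙ xₙ`
whenever `|mₙ| ≤ ρₙ`.

For `f, g` in the span with disjoint supports, write `h = f + g` and cut the support of `g` into
finitely many narrow angular sectors. On a sector the coefficients of `h` are `|hₙ| ω` up to a
small relative error, so the restriction of `h` is `ω ∑ |hₙ| xₙ` plus an error which the
multiplier bound makes small compared to it; removing the aligned part costs only the factor
`C`, so each sector piece, hence `g`, hence `f = h - g`, is controlled by `‖h‖`. Density of the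
span and boundedness of the coordinate functionals carry the estimate to all of `X`.
-/

open Finset

lemma le_of_forall_le_add_mul_rpow {p a b c : ℝ} (hp : 0 < p)
    (h : ∀ ε : ℝ, 0 < ε → a ≤ b + c * ε ^ p) : a ≤ b := by
  have hlim : Filter.Tendsto (fun ε : ℝ => b + c * ε ^ p) (nhdsWithin 0 (Set.Ioi 0))
      (nhds (b + c * 0 ^ p)) :=
    (tendsto_const_nhds.add (tendsto_const_nhds.mul
      ((Real.continuousAt_rpow_const 0 p (Or.inr hp.le)).tendsto))).mono_left
      nhdsWithin_le_nhds
  rw [Real.zero_rpow hp.ne', mul_zero, add_zero] at hlim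
  exact ge_of_tendsto hlim (eventually_nhdsWithin_of_forall h)

lemma le_rpow_inv_mul_of_rpow_le {p a b M : ℝ} (hp : 0 < p) (ha : 0 ≤ a) (hb : 0 ≤ b)
    (hM : 0 ≤ M) (h : a ^ p ≤ M * b ^ p) : a ≤ M ^ p⁻¹ * b := by
  rwa [← Real.rpow_le_rpow_iff ha (by positivity) hp, Real.mul_rpow (by positivity) hb,
    Real.rpow_inv_rpow hM hp.ne']

lemma Complex.norm_sub_norm_mul_exp_le (z : ℂ) (θ : ℝ) :
    ‖z - ‖z‖ * Complex.exp (θ * Complex.I)‖ ≤ ‖z‖ * |Complex.arg z - θ| := by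
  have hz : z - ‖z‖ * Complex.exp (θ * Complex.I)
      = ‖z‖ * Complex.exp (θ * Complex.I)
        * (Complex.exp (Complex.I * ↑(Complex.arg z - θ)) - 1) := by
    have harg : (θ : ℂ) * Complex.I + Complex.I * ↑(Complex.arg z - θ)
        = Complex.arg z * Complex.I := by
      push_cast; ring
    rw [mul_sub, mul_one, mul_assoc, ← Complex.exp_add, harg, Complex.norm_mul_exp_arg_mul_I]
  rw [hz, norm_mul, norm_mul, Complex.norm_exp_ofReal_mul_I, mul_one, Complex.norm_real,
    Real.norm_of_nonneg (norm_nonneg z), ← Real.norm_eq_abs]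
  gcongr
  exact Real.norm_exp_I_mul_ofReal_sub_one_le

def argSector (Δ : ℝ) (z : ℂ) : ℕ := ⌈(Complex.arg z + Real.pi) / Δ⌉₊

lemma argSector_le {Δ : ℝ} (hΔ : 0 < Δ) (z : ℂ) :
    argSector Δ z ≤ ⌈2 * Real.pi / Δ⌉₊ :=
  Nat.ceil_mono (div_le_div_of_nonneg_right (by linarith [Complex.arg_le_pi z]) hΔ.le)

lemma norm_sub_norm_mul_exp_argSector_le {Δ : ℝ} (hΔ : 0 < Δ) (z : ℂ) :
    ‖z - ‖z‖ * Complex.exp (((argSector Δ z * Δ - Real.pi : ℝ) : ℂ) * Complex.I)‖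
      ≤ Δ * ‖z‖ := by
  have hx : 0 ≤ (Complex.arg z + Real.pi) / Δ :=
    div_nonneg (by linarith [Complex.neg_pi_lt_arg z]) hΔ.le
  have h₁ := Nat.le_ceil ((Complex.arg z + Real.pi) / Δ)
  have h₂ := Nat.ceil_lt_add_one hx
  rw [div_le_iff₀ hΔ] at h₁
  rw [← sub_lt_iff_lt_add, lt_div_iff₀ hΔ] at h₂
  refine (Complex.norm_sub_norm_mul_exp_le z _).trans ?_
  rw [mul_comm]
  gcongr
  rw [argSector, abs_le]
  constructor <;> nlinarith

lemma one_sub_inv_two_rpow_pos {p : ℝ} (hp : 0 < p) : 0 < 1 - (2⁻¹ : ℝ) ^ p :=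
  sub_pos.mpr (Real.rpow_lt_one (by norm_num) (by norm_num) hp)

namespace PBasis

def multiplierConst (C p : ℝ) : ℝ := (1 + C ^ p) / (1 - 2⁻¹ ^ p)

lemma multiplierConst_pos {C p : ℝ} (hC : 0 ≤ C) (hp : 0 < p) : 0 < multiplierConst C p :=
  div_pos (by positivity) (one_sub_inv_two_rpow_pos hp)

section General

variable {𝕜 : Type*} [RCLike 𝕜] {X : Type*} [AddCommGroup X] [Module 𝕜 X] {p : ℝ}
  (bs : PBasis 𝕜 X p)

def comb (S : Finset ℕ) (a : ℕ → 𝕜) : X := ∑ n ∈ S, a n • bs.e n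

lemma N_zero : bs.N 0 = 0 := (bs.N_eq_zero_iff 0).mpr rfl

lemma N_smul_of_norm_eq_one {t : 𝕜} (ht : ‖t‖ = 1) (f : X) : bs.N (t • f) = bs.N f := by
  rw [bs.N_smul, ht, one_mul]

lemma N_neg (f : X) : bs.N (-f) = bs.N f := by
  rw [← neg_one_smul 𝕜 f, bs.N_smul_of_norm_eq_one (by simp)]

lemma N_sub_rpow_le (f g : X) : bs.N (f - g) ^ p ≤ bs.N f ^ p + bs.N g ^ p := by
  simpa only [sub_eq_add_neg, N_neg] using bs.N_padd f (-g)

lemma N_sum_rpow_le (hp : 0 < p) {ι : Type*} (T : Finset ι) (v : ι → X) :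
    bs.N (∑ i ∈ T, v i) ^ p ≤ ∑ i ∈ T, bs.N (v i) ^ p := by
  classical
  induction T using Finset.cons_induction with
  | empty => simp [N_zero, Real.zero_rpow hp.ne']
  | cons a T ha ih =>
    rw [sum_cons, sum_cons]
    exact (bs.N_padd _ _).trans (by linarith)

lemma N_smul_rpow (t : 𝕜) (f : X) :
    bs.N (t • f) ^ p = ‖t‖ ^ p * bs.N f ^ p := by
  rw [bs.N_smul, Real.mul_rpow (norm_nonneg t) (bs.N_nonneg f)]

lemma N_comb_rpow_le (hp : 0 < p) (S : Finset ℕ) (a : ℕ → 𝕜) :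
    bs.N (bs.comb S a) ^ p ≤ ∑ n ∈ S, ‖a n‖ ^ p * bs.N (bs.e n) ^ p :=
  (bs.N_sum_rpow_le hp S _).trans_eq (sum_congr rfl fun _ _ => bs.N_smul_rpow _ _)

lemma coord_comb (S : Finset ℕ) (a : ℕ → 𝕜) (m : ℕ) :
    bs.coord m (bs.comb S a) = if m ∈ S then a m else 0 := by
  simp [comb, bs.biorth]

lemma comb_mem_span (S : Finset ℕ) (a : ℕ → 𝕜) :
    bs.comb S a ∈ Submodule.span 𝕜 (Set.range bs.e) :=
  Submodule.sum_mem _ fun n _ => Submodule.smul_mem _ _ (Submodule.subset_span ⟨n, rfl⟩)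

lemma coord_proj (A : Finset ℕ) (f : X) (m : ℕ) :
    bs.coord m (bs.proj A f) = if m ∈ A then bs.coord m f else 0 :=
  bs.coord_comb A _ m

lemma proj_mem_span (A : Finset ℕ) (f : X) :
    bs.proj A f ∈ Submodule.span 𝕜 (Set.range bs.e) :=
  bs.comb_mem_span A _

lemma proj_sub (A : Finset ℕ) (f g : X) : bs.proj A (f - g) = bs.proj A f - bs.proj A g := by
  simp only [proj, map_sub, sub_smul, sum_sub_distrib]

lemma disjoint_supp_proj_supp_sub_proj (A : Finset ℕ) (f : X) :
    Disjoint (bs.supp (bs.proj A f)) (bs.supp (f - bs.proj A f)) := by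
  refine Set.disjoint_left.mpr fun n hn hn' => ?_
  simp only [supp, Set.mem_ofPred_eq, map_sub, coord_proj] at hn hn'
  split_ifs at hn hn' <;> simp_all

lemma exists_finset_eq_supp_of_mem_span {f : X}
    (hf : f ∈ Submodule.span 𝕜 (Set.range bs.e)) :
    ∃ B : Finset ℕ, (B : Set ℕ) = bs.supp f ∧ bs.proj B f = f := by
  obtain ⟨c, rfl⟩ := Finsupp.mem_span_range_iff_exists_finsupp.mp hf
  have hcoord : ∀ m, bs.coord m (c.sum fun n a => a • bs.e n) = c m := fun m => by
    have := bs.coord_comb c.support c m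
    rw [comb] at this
    rw [Finsupp.sum, this]
    split_ifs with h
    · rfl
    · exact (Finsupp.notMem_support_iff.mp h).symm
  refine ⟨c.support, ?_, ?_⟩
  · ext n; simp [supp, hcoord]
  · simp only [proj, hcoord]; rfl

lemma exists_N_proj_rpow_le (hp : 0 < p) (A : Finset ℕ) :
    ∃ c : ℝ, 0 ≤ c ∧ ∀ f : X, bs.N (bs.proj A f) ^ p ≤ c * bs.N f ^ p := by
  obtain ⟨c₁, hc₁⟩ := bs.coord_bdd
  obtain ⟨c₂, hc₂⟩ := bs.e_bdd
  have hc : 0 ≤ max c₁ 0 * max c₂ 0 := mul_nonneg (le_max_right _ _) (le_max_right _ _)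
  refine ⟨#A * (max c₁ 0 * max c₂ 0) ^ p, by positivity, fun f => ?_⟩
  refine (bs.N_comb_rpow_le hp A _).trans ?_
  rw [← nsmul_eq_mul, ← sum_const, sum_mul]
  refine sum_le_sum fun n _ => ?_
  rw [← Real.mul_rpow (norm_nonneg _) (bs.N_nonneg _), ← Real.mul_rpow (by positivity)
    (bs.N_nonneg _), mul_right_comm]
  refine Real.rpow_le_rpow (mul_nonneg (norm_nonneg _) (bs.N_nonneg _))
    (mul_le_mul ?_ ?_ (bs.N_nonneg _) ?_) hp.le
  · exact (hc₁ n f).trans (mul_le_mul_of_nonneg_right (le_max_left _ _) (bs.N_nonneg f))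
  · exact (hc₂ n).trans (le_max_left _ _)
  · exact mul_nonneg (le_max_right _ _) (bs.N_nonneg f)

lemma N_proj_rpow_le_of_forall_mem_span (hp : 0 < p) {M : ℝ} (hM : 0 ≤ M) (A : Finset ℕ)
    (h : ∀ u ∈ Submodule.span 𝕜 (Set.range bs.e), bs.N (bs.proj A u) ^ p ≤ M * bs.N u ^ p)
    (f : X) : bs.N (bs.proj A f) ^ p ≤ M * bs.N f ^ p := by
  obtain ⟨c, hc, hcA⟩ := bs.exists_N_proj_rpow_le hp A
  refine le_of_forall_le_add_mul_rpow (c := M + c) hp fun ε hε => ?_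
  obtain ⟨u, hu, hfu⟩ := bs.dense_span f ε hε
  have hfu' : bs.N (f - u) ^ p ≤ ε ^ p := Real.rpow_le_rpow (bs.N_nonneg _) hfu.le hp.le
  have hsplit : bs.proj A f = bs.proj A u - bs.proj A (u - f) := by
    rw [← proj_sub, sub_sub_cancel]
  have hu_le : bs.N u ^ p ≤ bs.N f ^ p + bs.N (f - u) ^ p := by
    simpa using bs.N_sub_rpow_le f (f - u)
  have huf : bs.N (u - f) = bs.N (f - u) := by rw [← neg_sub, N_neg]
  calc bs.N (bs.proj A f) ^ p
      ≤ bs.N (bs.proj A u) ^ p + bs.N (bs.proj A (u - f)) ^ p := by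
        rw [hsplit]; exact bs.N_sub_rpow_le _ _
    _ ≤ M * (bs.N f ^ p + ε ^ p) + c * ε ^ p := by
        gcongr
        · exact (h u hu).trans (by gcongr; linarith)
        · exact (hcA _).trans (by rw [huf]; gcongr)
    _ = M * bs.N f ^ p + (M + c) * ε ^ p := by ring

lemma N_rpow_le_of_disjoint (hp : 0 < p) {M : ℝ} (hM : 0 ≤ M)
    (h : ∀ (A : Finset ℕ) (f : X), bs.N (bs.proj A f) ^ p ≤ M * bs.N f ^ p)
    {f g : X} (hfg : Disjoint (bs.supp f) (bs.supp g)) :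
    bs.N f ^ p ≤ M * bs.N (f + g) ^ p := by
  classical
  refine le_of_forall_le_add_mul_rpow (c := 1 + M) hp fun ε hε => ?_
  obtain ⟨u, hu, hfu⟩ := bs.dense_span f ε hε
  have hfu' : bs.N (f - u) ^ p ≤ ε ^ p := Real.rpow_le_rpow (bs.N_nonneg _) hfu.le hp.le
  obtain ⟨B, -, hBu⟩ := bs.exists_finset_eq_supp_of_mem_span hu
  set A := B.filter fun n => bs.coord n f ≠ 0
  have hAB : bs.proj A f = bs.proj B f :=
    sum_filter_of_ne fun n _ hn h0 => hn (by rw [h0, zero_smul])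
  have hAfg : bs.proj A (f + g) = bs.proj A f := by
    refine sum_congr rfl fun n hn => ?_
    have hg : bs.coord n g = 0 := by
      by_contra hg
      exact Set.disjoint_left.mp hfg (mem_filter.mp hn).2 hg
    rw [map_add, hg, add_zero]
  have hrest : f - bs.proj A f = (f - u) - bs.proj B (f - u) := by
    rw [hAB, proj_sub, hBu]; abel
  calc bs.N f ^ p ≤ bs.N (bs.proj A f) ^ p + bs.N (f - bs.proj A f) ^ p := by
        simpa using bs.N_padd (bs.proj A f) (f - bs.proj A f)
    _ ≤ M * bs.N (f + g) ^ p + (bs.N (f - u) ^ p + M * bs.N (f - u) ^ p) := by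
        gcongr
        · rw [← hAfg]; exact h A _
        · rw [hrest]; exact (bs.N_sub_rpow_le _ _).trans (by gcongr; exact h B _)
    _ ≤ M * bs.N (f + g) ^ p + (1 + M) * ε ^ p := by
        nlinarith

end General

section Positive

variable {X : Type*} [AddCommGroup X] [Module ℂ X] {p C : ℝ}

def PositiveDisjointBound (bs : PBasis ℂ X p) (C : ℝ) : Prop :=
  ∀ f g : X, f ∈ Submodule.span ℂ (Set.range bs.e) →
    g ∈ Submodule.span ℂ (Set.range bs.e) →
    (∀ n : ℕ, (bs.coord n g).im = 0 ∧ 0 ≤ (bs.coord n g).re) →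
    Disjoint (bs.supp f) (bs.supp g) → bs.N f ≤ C * bs.N (f + g)

namespace PositiveDisjointBound

variable {bs : PBasis ℂ X p} (hG : bs.PositiveDisjointBound C)
include hG

lemma N_le_mul_N_add_smul_comb {u : X} (hu : u ∈ Submodule.span ℂ (Set.range bs.e))
    {S : Finset ℕ} (huS : ∀ n ∈ S, bs.coord n u = 0) {ρ : ℕ → ℝ} (hρ : ∀ n ∈ S, 0 ≤ ρ n)
    {ω : ℂ} (hω : ‖ω‖ = 1) :
    bs.N u ≤ C * bs.N (u + ω • bs.comb S (fun n => (ρ n : ℂ))) := by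
  have hω₀ : ω ≠ 0 := norm_ne_zero_iff.mp (by rw [hω]; exact one_ne_zero)
  have hω' : ‖ω⁻¹‖ = 1 := by rw [norm_inv, hω, inv_one]
  have hcoord (n : ℕ) := bs.coord_comb S (fun n => (ρ n : ℂ)) n
  have key := hG (ω⁻¹ • u) (bs.comb S fun n => (ρ n : ℂ))
    (Submodule.smul_mem _ _ hu) (bs.comb_mem_span _ _)
    (fun n => by
      rw [hcoord]
      split_ifs with h
      · simp [hρ n h]
      · simp)
    (Set.disjoint_left.mpr fun n hn hn' => by
      by_cases h : n ∈ S
      · exact hn (by simp [huS n h])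
      · exact hn' (by rw [hcoord, if_neg h]))
  have hrot : ω⁻¹ • u + bs.comb S (fun n => (ρ n : ℂ))
      = ω⁻¹ • (u + ω • bs.comb S fun n => (ρ n : ℂ)) := by
    rw [smul_add, smul_smul, inv_mul_cancel₀ hω₀, one_smul]
  rwa [hrot, bs.N_smul_of_norm_eq_one hω', bs.N_smul_of_norm_eq_one hω'] at key

lemma N_comb_rpow_le_of_subset (hC : 0 ≤ C) (hp : 0 ≤ p) {S T : Finset ℕ} (hTS : T ⊆ S)
    {ρ : ℕ → ℝ} (hρ : ∀ n ∈ S, 0 ≤ ρ n) :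
    bs.N (bs.comb T fun n => (ρ n : ℂ)) ^ p
      ≤ (1 + C ^ p) * bs.N (bs.comb S fun n => (ρ n : ℂ)) ^ p := by
  classical
  set ρ' : ℕ → ℂ := fun n => (ρ n : ℂ)
  have hsplit : bs.comb (S \ T) ρ' + bs.comb T ρ' = bs.comb S ρ' := sum_sdiff hTS
  have hrest : bs.N (bs.comb (S \ T) ρ') ≤ C * bs.N (bs.comb S ρ') := by
    have := hG.N_le_mul_N_add_smul_comb (bs.comb_mem_span (S \ T) ρ')
      (fun n hn => by simp [coord_comb, hn]) (fun n hn => hρ n (hTS hn)) norm_one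
    rwa [one_smul, hsplit] at this
  calc bs.N (bs.comb T ρ') ^ p
      ≤ bs.N (bs.comb S ρ') ^ p + bs.N (bs.comb (S \ T) ρ') ^ p := by
        have hT : bs.comb T ρ' = bs.comb S ρ' - bs.comb (S \ T) ρ' := by
          rw [← hsplit, add_sub_cancel_left]
        rw [hT]
        exact bs.N_sub_rpow_le _ _
    _ ≤ bs.N (bs.comb S ρ') ^ p + (C * bs.N (bs.comb S ρ')) ^ p := by
        gcongr; exact bs.N_nonneg _
    _ = (1 + C ^ p) * bs.N (bs.comb S ρ') ^ p := by
        rw [Real.mul_rpow hC (bs.N_nonneg _)]; ring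

lemma N_comb_rpow_le_add_pow_of_nonneg_of_le (hC : 0 ≤ C) (hp : 0 < p) {S : Finset ℕ}
    {ρ : ℕ → ℝ} (hρ : ∀ n ∈ S, 0 ≤ ρ n) (K : ℕ) {a : ℕ → ℝ}
    (ha : ∀ n ∈ S, 0 ≤ a n ∧ a n ≤ ρ n) :
    bs.N (bs.comb S fun n => (a n : ℂ)) ^ p
      ≤ multiplierConst C p * bs.N (bs.comb S fun n => (ρ n : ℂ)) ^ p
        + (2⁻¹ ^ p) ^ K * ∑ n ∈ S, ρ n ^ p * bs.N (bs.e n) ^ p := by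
  classical
  set r : ℝ := 2⁻¹ ^ p
  have hr₀ : 0 ≤ r := by positivity
  set τ := multiplierConst C p
  have hτ : 0 ≤ τ := (multiplierConst_pos hC hp).le
  have hv : 0 ≤ bs.N (bs.comb S fun n => (ρ n : ℂ)) ^ p := by
    have := bs.N_nonneg (bs.comb S fun n => (ρ n : ℂ)); positivity
  induction K generalizing a with
  | zero =>
    calc bs.N (bs.comb S fun n => (a n : ℂ)) ^ p
        ≤ ∑ n ∈ S, ‖(a n : ℂ)‖ ^ p * bs.N (bs.e n) ^ p := bs.N_comb_rpow_le hp S _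
      _ ≤ ∑ n ∈ S, ρ n ^ p * bs.N (bs.e n) ^ p := by
        refine sum_le_sum fun n hn => ?_
        have := bs.N_nonneg (bs.e n)
        rw [Complex.norm_real, Real.norm_of_nonneg (ha n hn).1]
        gcongr
        · exact (ha n hn).1
        · exact (ha n hn).2
      _ ≤ _ := by rw [pow_zero, one_mul]; linarith [mul_nonneg hτ hv]
  | succ K ih =>
    -- peel off the leading binary digit: `2a = ρ 𝟙_T + s` with `0 ≤ s ≤ ρ`
    set T := S.filter fun n => ρ n ≤ 2 * a n
    set s : ℕ → ℝ := fun n => 2 * a n - if ρ n ≤ 2 * a n then ρ n else 0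
    have hs : ∀ n ∈ S, 0 ≤ s n ∧ s n ≤ ρ n := fun n hn => by
      have := ha n hn
      simp only [s]
      split_ifs <;> constructor <;> linarith
    have hdecomp : (bs.comb S fun n => (a n : ℂ))
        = (2 : ℂ)⁻¹ • ((bs.comb T fun n => (ρ n : ℂ)) + bs.comb S fun n => (s n : ℂ)) := by
      simp only [comb, T, sum_filter, smul_add, smul_sum, ← sum_add_distrib]
      refine sum_congr rfl fun n _ => ?_
      simp only [s]
      split_ifs <;> push_cast <;> module
    have hcontr : r * ((1 + C ^ p) + τ) ≤ τ := by
      have hr₁ : 0 < 1 - r := one_sub_inv_two_rpow_pos hp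
      have : (1 - r) * τ = 1 + C ^ p := mul_div_cancel₀ _ hr₁.ne'
      have : 0 ≤ 1 + C ^ p := by positivity
      nlinarith
    calc bs.N (bs.comb S fun n => (a n : ℂ)) ^ p
        = r * bs.N ((bs.comb T fun n => (ρ n : ℂ)) + bs.comb S fun n => (s n : ℂ)) ^ p := by
          rw [hdecomp, bs.N_smul_rpow, norm_inv, Complex.norm_two]
      _ ≤ r * (bs.N (bs.comb T fun n => (ρ n : ℂ)) ^ p
            + bs.N (bs.comb S fun n => (s n : ℂ)) ^ p) := by
          gcongr; exact bs.N_padd _ _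
      _ ≤ r * ((1 + C ^ p) * bs.N (bs.comb S fun n => (ρ n : ℂ)) ^ p
            + (τ * bs.N (bs.comb S fun n => (ρ n : ℂ)) ^ p
              + r ^ K * ∑ n ∈ S, ρ n ^ p * bs.N (bs.e n) ^ p)) := by
          gcongr
          · exact hG.N_comb_rpow_le_of_subset hC hp.le (filter_subset _ _) hρ
          · exact ih hs
      _ = r * ((1 + C ^ p) + τ) * bs.N (bs.comb S fun n => (ρ n : ℂ)) ^ p
            + r ^ (K + 1) * ∑ n ∈ S, ρ n ^ p * bs.N (bs.e n) ^ p := by ring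
      _ ≤ _ := by gcongr

lemma N_comb_rpow_le_of_nonneg_of_le (hC : 0 ≤ C) (hp : 0 < p) {S : Finset ℕ}
    {ρ : ℕ → ℝ} (hρ : ∀ n ∈ S, 0 ≤ ρ n) {a : ℕ → ℝ} (ha : ∀ n ∈ S, 0 ≤ a n ∧ a n ≤ ρ n) :
    bs.N (bs.comb S fun n => (a n : ℂ)) ^ p
      ≤ multiplierConst C p * bs.N (bs.comb S fun n => (ρ n : ℂ)) ^ p := by
  have hlim := ((tendsto_pow_atTop_nhds_zero_of_lt_one (r := (2⁻¹ : ℝ) ^ p) (by positivity)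
    (Real.rpow_lt_one (by norm_num) (by norm_num) hp)).mul_const
    (∑ n ∈ S, ρ n ^ p * bs.N (bs.e n) ^ p)).const_add
    (multiplierConst C p * bs.N (bs.comb S fun n => (ρ n : ℂ)) ^ p)
  rw [zero_mul, add_zero] at hlim
  exact ge_of_tendsto' hlim fun K =>
    hG.N_comb_rpow_le_add_pow_of_nonneg_of_le hC hp hρ K ha

lemma N_comb_rpow_le_of_abs_le (hC : 0 ≤ C) (hp : 0 < p) {S : Finset ℕ}
    {ρ : ℕ → ℝ} (hρ : ∀ n ∈ S, 0 ≤ ρ n) {a : ℕ → ℝ} (ha : ∀ n ∈ S, |a n| ≤ ρ n) :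
    bs.N (bs.comb S fun n => (a n : ℂ)) ^ p
      ≤ 2 * multiplierConst C p * bs.N (bs.comb S fun n => (ρ n : ℂ)) ^ p := by
  have hsplit : (bs.comb S fun n => (a n : ℂ))
      = (bs.comb S fun n => ((max (a n) 0 : ℝ) : ℂ))
        - bs.comb S fun n => ((max (-a n) 0 : ℝ) : ℂ) := by
    simp only [comb, ← sum_sub_distrib, ← sub_smul, ← Complex.ofReal_sub,
      max_zero_sub_max_neg_zero_eq_self]
  have hpos := hG.N_comb_rpow_le_of_nonneg_of_le hC hp hρ (a := fun n => max (a n) 0)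
    fun n hn => ⟨le_max_right _ _, max_le ((le_abs_self _).trans (ha n hn)) (hρ n hn)⟩
  have hneg := hG.N_comb_rpow_le_of_nonneg_of_le hC hp hρ (a := fun n => max (-a n) 0)
    fun n hn => ⟨le_max_right _ _, max_le ((neg_le_abs _).trans (ha n hn)) (hρ n hn)⟩
  rw [hsplit]
  linarith [bs.N_sub_rpow_le (bs.comb S fun n => ((max (a n) 0 : ℝ) : ℂ))
    (bs.comb S fun n => ((max (-a n) 0 : ℝ) : ℂ))]

lemma N_comb_rpow_le_of_norm_le (hC : 0 ≤ C) (hp : 0 < p) {S : Finset ℕ}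
    {ρ : ℕ → ℝ} (hρ : ∀ n ∈ S, 0 ≤ ρ n) {m : ℕ → ℂ} (hm : ∀ n ∈ S, ‖m n‖ ≤ ρ n) :
    bs.N (bs.comb S m) ^ p
      ≤ 4 * multiplierConst C p * bs.N (bs.comb S fun n => (ρ n : ℂ)) ^ p := by
  have hsplit : bs.comb S m
      = (bs.comb S fun n => ((m n).re : ℂ)) + Complex.I • bs.comb S fun n => ((m n).im : ℂ) := by
    simp only [comb, smul_sum, smul_smul, ← sum_add_distrib, ← add_smul, mul_comm Complex.I,
      Complex.re_add_im]
  have hre := hG.N_comb_rpow_le_of_abs_le hC hp hρ (a := fun n => (m n).re)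
    fun n hn => (Complex.abs_re_le_norm _).trans (hm n hn)
  have him := hG.N_comb_rpow_le_of_abs_le hC hp hρ (a := fun n => (m n).im)
    fun n hn => (Complex.abs_im_le_norm _).trans (hm n hn)
  have hsum := bs.N_padd (bs.comb S fun n => ((m n).re : ℂ))
    (Complex.I • bs.comb S fun n => ((m n).im : ℂ))
  rw [bs.N_smul_of_norm_eq_one Complex.norm_I, ← hsplit] at hsum
  linarith

lemma N_proj_rpow_le_of_near_ray (hC : 0 ≤ C) (hp : 0 < p) {h : X}
    (hh : h ∈ Submodule.span ℂ (Set.range bs.e)) (S : Finset ℕ) {ω : ℂ} (hω : ‖ω‖ = 1)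
    {δ : ℝ} (hδ : 0 ≤ δ)
    (hsmall : 4 * multiplierConst C p * (1 + C ^ p) * δ ^ p ≤ 2⁻¹)
    (hnear : ∀ n ∈ S, ‖bs.coord n h - ‖bs.coord n h‖ * ω‖ ≤ δ * ‖bs.coord n h‖) :
    bs.N (bs.proj S h) ^ p ≤ 4 * (1 + C ^ p) * bs.N h ^ p := by
  set μ := 4 * multiplierConst C p
  -- `h = u + V + E`: `u` vanishes on `S`, `V` is aligned with `ω`, `E` is the angular error
  set R := bs.comb S fun n => ((‖bs.coord n h‖ : ℝ) : ℂ)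
  set V := ω • R
  set E := bs.proj S h - V
  set u := h - bs.proj S h
  have hγ : 1 ≤ 1 + C ^ p := le_add_of_nonneg_right (by positivity)
  have hμδ : 0 ≤ μ * δ ^ p := by have := multiplierConst_pos hC hp; positivity
  have hNV : bs.N V = bs.N R := bs.N_smul_of_norm_eq_one hω R
  have hE : bs.N E ^ p ≤ μ * δ ^ p * bs.N V ^ p := by
    have hEcomb : E = bs.comb S fun n => bs.coord n h - ‖bs.coord n h‖ * ω := by
      simp only [E, V, R, proj, comb, smul_sum, smul_smul, ← sum_sub_distrib, ← sub_smul,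
        mul_comm ω]
    have hδR : (bs.comb S fun n => ((δ * ‖bs.coord n h‖ : ℝ) : ℂ)) = (δ : ℂ) • R := by
      simp only [R, comb, smul_sum, smul_smul, Complex.ofReal_mul]
    have := hG.N_comb_rpow_le_of_norm_le hC hp (fun n _ => by positivity) hnear
    rwa [← hEcomb, hδR, bs.N_smul_rpow, Complex.norm_real, Real.norm_of_nonneg hδ, ← hNV,
      ← mul_assoc] at this
  have hu : bs.N u ≤ C * bs.N (u + V) :=
    hG.N_le_mul_N_add_smul_comb (Submodule.sub_mem _ hh (bs.proj_mem_span S h))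
      (fun n hn => by rw [map_sub, coord_proj, if_pos hn, sub_self])
      (fun n _ => norm_nonneg _) hω
  have huV : u + V = h - E := by simp only [u, E]; abel
  have hV : bs.N V ^ p ≤ 2 * (1 + C ^ p) * bs.N h ^ p := by
    have h1 : bs.N V ^ p ≤ bs.N (u + V) ^ p + bs.N u ^ p := by
      simpa using bs.N_sub_rpow_le (u + V) u
    have h2 : bs.N u ^ p ≤ C ^ p * bs.N (u + V) ^ p := by
      rw [← Real.mul_rpow hC (bs.N_nonneg _)]
      exact Real.rpow_le_rpow (bs.N_nonneg _) hu hp.le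
    have h3 : bs.N (u + V) ^ p ≤ bs.N h ^ p + bs.N E ^ p := by
      rw [huV]; exact bs.N_sub_rpow_le h E
    have h4 : (1 + C ^ p) * bs.N E ^ p ≤ 2⁻¹ * bs.N V ^ p := by
      have := bs.N_nonneg V
      calc (1 + C ^ p) * bs.N E ^ p ≤ (1 + C ^ p) * (μ * δ ^ p * bs.N V ^ p) := by gcongr
        _ = μ * (1 + C ^ p) * δ ^ p * bs.N V ^ p := by ring
        _ ≤ 2⁻¹ * bs.N V ^ p := by gcongr
    have : 0 ≤ C ^ p := by positivity
    nlinarith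
  have hPSh : bs.proj S h = V + E := by simp only [E]; abel
  have hμδ' : μ * δ ^ p ≤ 1 := by nlinarith
  have hEV : bs.N E ^ p ≤ bs.N V ^ p :=
    hE.trans (mul_le_of_le_one_left (by have := bs.N_nonneg V; positivity) hμδ')
  calc bs.N (bs.proj S h) ^ p ≤ bs.N V ^ p + bs.N E ^ p := by rw [hPSh]; exact bs.N_padd V E
    _ ≤ 2 * bs.N V ^ p := by linarith
    _ ≤ 4 * (1 + C ^ p) * bs.N h ^ p := by linarith

lemma N_rpow_le_of_mem_span (hC : 0 ≤ C) (hp : 0 < p) {Δ : ℝ} (hΔ : 0 < Δ)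
    (hsmall : 4 * multiplierConst C p * (1 + C ^ p) * Δ ^ p ≤ 2⁻¹) {f g : X}
    (hf : f ∈ Submodule.span ℂ (Set.range bs.e)) (hg : g ∈ Submodule.span ℂ (Set.range bs.e))
    (hfg : Disjoint (bs.supp f) (bs.supp g)) :
    bs.N f ^ p ≤ (1 + (⌈2 * Real.pi / Δ⌉₊ + 1) * (4 * (1 + C ^ p))) * bs.N (f + g) ^ p := by
  classical
  set J := ⌈2 * Real.pi / Δ⌉₊
  set h := f + g
  obtain ⟨B, hB, hBg⟩ := bs.exists_finset_eq_supp_of_mem_span hg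
  set sector : ℕ → Finset ℕ := fun j => B.filter fun n => argSector Δ (bs.coord n h) = j
  have hBh : bs.proj B h = g := by
    refine (sum_congr rfl fun n hn => ?_).trans hBg
    have hf0 : bs.coord n f = 0 := by
      by_contra hf0
      exact Set.disjoint_left.mp hfg hf0 (hB ▸ hn)
    rw [map_add, hf0, zero_add]
  have hsectors : g = ∑ j ∈ range (J + 1), bs.proj (sector j) h := by
    rw [← hBh]
    exact (sum_fiberwise_of_maps_to
      (fun n _ => mem_range_succ_iff.mpr (argSector_le hΔ _)) _).symm
  have hsector (j : ℕ) : bs.N (bs.proj (sector j) h) ^ p ≤ 4 * (1 + C ^ p) * bs.N h ^ p := by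
    refine hG.N_proj_rpow_le_of_near_ray hC hp (Submodule.add_mem _ hf hg) (sector j)
      (Complex.norm_exp_ofReal_mul_I (j * Δ - Real.pi)) hΔ.le hsmall fun n hn => ?_
    rw [← (mem_filter.mp hn).2]
    exact norm_sub_norm_mul_exp_argSector_le hΔ _
  calc bs.N f ^ p ≤ bs.N h ^ p + bs.N g ^ p := by
        simpa [h] using bs.N_sub_rpow_le h g
    _ ≤ bs.N h ^ p + ∑ j ∈ range (J + 1), 4 * (1 + C ^ p) * bs.N h ^ p := by
        rw [hsectors]
        gcongr
        exact (bs.N_sum_rpow_le hp _ _).trans (sum_le_sum fun j _ => hsector j)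
    _ = (1 + (J + 1) * (4 * (1 + C ^ p))) * bs.N h ^ p := by
        rw [sum_const, card_range, nsmul_eq_mul]; push_cast; ring

lemma N_proj_rpow_le (hC : 0 ≤ C) (hp : 0 < p) {Δ : ℝ} (hΔ : 0 < Δ)
    (hsmall : 4 * multiplierConst C p * (1 + C ^ p) * Δ ^ p ≤ 2⁻¹)
    (A : Finset ℕ) (f : X) :
    bs.N (bs.proj A f) ^ p
      ≤ (1 + (⌈2 * Real.pi / Δ⌉₊ + 1) * (4 * (1 + C ^ p))) * bs.N f ^ p := by
  refine bs.N_proj_rpow_le_of_forall_mem_span hp (by positivity) A (fun u hu => ?_) f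
  simpa using hG.N_rpow_le_of_mem_span hC hp hΔ hsmall (bs.proj_mem_span A u)
    (Submodule.sub_mem _ hu (bs.proj_mem_span A u)) (bs.disjoint_supp_proj_supp_sub_proj A u)

end PositiveDisjointBound

end Positive

end PBasis

theorem positive_coeff_implies_unconditional_complex_general (p C : ℝ) (hp : 0 < p)
    (hC : 0 < C) :
    ∃ K : ℝ, 0 < K ∧
      ∀ (X : Type*) [AddCommGroup X] [Module ℂ X] (bs : PBasis ℂ X p),
        (∀ f g : X, f ∈ Submodule.span ℂ (Set.range bs.e) →
          g ∈ Submodule.span ℂ (Set.range bs.e) →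
          (∀ n : ℕ, (bs.coord n g).im = 0 ∧ 0 ≤ (bs.coord n g).re) →
          Disjoint (bs.supp f) (bs.supp g) → bs.N f ≤ C * bs.N (f + g)) →
        (∀ f g : X, Disjoint (bs.supp f) (bs.supp g) → bs.N f ≤ K * bs.N (f + g)) ∧
          bs.IsUncondWith K := by
  have hτ := PBasis.multiplierConst_pos hC.le hp
  set c := 4 * PBasis.multiplierConst C p * (1 + C ^ p)
  -- the sector width for which the angular error is absorbed in `N_proj_rpow_le_of_near_ray`
  set Δ : ℝ := (2⁻¹ / c) ^ p⁻¹
  have hΔ : 0 < Δ := by positivity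
  have hsmall : c * Δ ^ p ≤ 2⁻¹ := by
    rw [Real.rpow_inv_rpow (by positivity) hp.ne', mul_div_cancel₀ _ (by positivity)]
  set M := 1 + (⌈2 * Real.pi / Δ⌉₊ + 1) * (4 * (1 + C ^ p))
  have hM : 0 ≤ M := by positivity
  refine ⟨M ^ p⁻¹, by positivity, fun X _ _ bs hG => ?_⟩
  have hproj := PBasis.PositiveDisjointBound.N_proj_rpow_le hG hC.le hp hΔ hsmall
  refine ⟨fun f g hfg => ?_, fun A f => ?_⟩
  · exact le_rpow_inv_mul_of_rpow_le hp (bs.N_nonneg _) (bs.N_nonneg _) hM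
      (bs.N_rpow_le_of_disjoint hp hM hproj hfg)
  · exact le_rpow_inv_mul_of_rpow_le hp (bs.N_nonneg _) (bs.N_nonneg _) hM (hproj A f)

/-- (Complex case of Lemma 3.2.) For every `0 < p ≤ 1` and `C > 0` there is
`K = K(C,p) > 0` such that: for any basis of a complex `p`-Banach space, if
`‖f‖ ≤ C‖f + g‖` for all disjointly supported `f, g` in the span with `g` having
nonnegative real coefficients, then `‖f‖ ≤ K‖f + g‖` for all disjointly supported
`f, g ∈ X`; in particular the basis is `K`-unconditional. -/
theorem positive_coeff_implies_unconditional_complex (p C : ℝ) (hp : 0 < p) (hp1 : p ≤ 1)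
    (hC : 0 < C) :
    ∃ K : ℝ, 0 < K ∧
      ∀ (X : Type*) [AddCommGroup X] [Module ℂ X] (bs : PBasis ℂ X p),
        (∀ f g : X, f ∈ Submodule.span ℂ (Set.range bs.e) →
          g ∈ Submodule.span ℂ (Set.range bs.e) →
          (∀ n : ℕ, (bs.coord n g).im = 0 ∧ 0 ≤ (bs.coord n g).re) →
          Disjoint (bs.supp f) (bs.supp g) → bs.N f ≤ C * bs.N (f + g)) →
        (∀ f g : X, Disjoint (bs.supp f) (bs.supp g) → bs.N f ≤ K * bs.N (f + g)) ∧
          bs.IsUncondWith K :=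
  positive_coeff_implies_unconditional_complex_general p C hp hC
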